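/- If f(z) = ωz + a₂z² + ⋯ is an element of G of finite compositional order, then the order of f in G equals the multiplicative order of ω in F \ {0}. -/

import Mathlib

open PowerSeries

/-- Composition (substitution) of formal power series: coefficient formula,
valid for `g` with zero constant term. -/
noncomputable def PS.comp {F : Type*} [CommRing F] (f g : PowerSeries F) : PowerSeries F :=
  PowerSeries.mk fun k =>
    ∑ n ∈ Finset.range (k + 1), (PowerSeries.coeff (R := F) n f) * (PowerSeries.coeff (R := F) k (g ^ n))

/-- The group `G` of series with zero constant term and nonzero linear coefficient. -/
def PS.G (F : Type*) [CommRing F] : Set (PowerSeries F) :=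
  {f | PowerSeries.constantCoeff (R := F) f = 0 ∧ PowerSeries.coeff (R := F) 1 f ≠ 0}

/-- `n`-fold compositional iterate of `f`. -/
noncomputable def PS.iter {F : Type*} [CommRing F] (f : PowerSeries F) : ℕ → PowerSeries F
  | 0 => PowerSeries.X
  | n + 1 => PS.comp f (PS.iter f n)

/-- `f` has compositional order exactly `n`. -/
def PS.HasOrder {F : Type*} [CommRing F] (f : PowerSeries F) (n : ℕ) : Prop :=
  PS.iter f n = PowerSeries.X ∧ ∀ m, 0 < m → m < n → PS.iter f m ≠ PowerSeries.X

/-!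
The linear coefficient is multiplicative under composition, so `coeff 1 (f^{∘n}) = ω^n` and
`f^{∘n} = X` forces `ω^n = 1`. Conversely, if `ω^m = 1` with `0 < m < n`, then `g = f^{∘m}`
is tangent to the identity and still of finite order. Such a `g` must be `X`: if
`g = X + a X^k + ⋯` with `k ≥ 2` and `a ≠ 0`, then `g^{∘j} = X + j a X^k + ⋯`, which is never `X`
in characteristic zero. This contradicts the minimality of `n`.
-/

namespace PS

variable {R : Type*} [CommRing R]

theorem coeff_comp (f g : R⟦X⟧) (k : ℕ) :
    coeff k (comp f g) = ∑ n ∈ Finset.range (k + 1), coeff n f * coeff k (g ^ n) :=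
  coeff_mk _ _

theorem coeff_pow_eq_zero_of_lt {g : R⟦X⟧} (hg : constantCoeff g = 0) {k n : ℕ} (h : k < n) :
    coeff k (g ^ n) = 0 :=
  X_pow_dvd_iff.mp (pow_dvd_pow_of_dvd (X_dvd_iff.mpr hg) n) k h

theorem comp_eq_subst (f : R⟦X⟧) {g : R⟦X⟧} (hg : constantCoeff g = 0) :
    comp f g = f.subst g := by
  ext k
  rw [coeff_comp, coeff_subst' (HasSubst.of_constantCoeff_zero' hg)]
  refine (finsum_eq_sum_of_support_subset _ fun n hn => ?_).symm
  by_contra hnk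
  simp only [Finset.coe_range, Set.mem_Iio, not_lt] at hnk
  exact hn (by simp only [coeff_pow_eq_zero_of_lt hg (by omega : k < n), mul_zero])

theorem constantCoeff_comp (f g : R⟦X⟧) : constantCoeff (comp f g) = constantCoeff f := by
  simpa using coeff_comp f g 0

theorem coeff_one_comp (f g : R⟦X⟧) : coeff 1 (comp f g) = coeff 1 f * coeff 1 g := by
  simp [coeff_comp, Finset.sum_range_succ]

theorem constantCoeff_iter {f : R⟦X⟧} (hf : constantCoeff f = 0) (m : ℕ) :
    constantCoeff (iter f m) = 0 := by
  cases m with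
  | zero => exact constantCoeff_X (R := R)
  | succ m => rw [iter, constantCoeff_comp, hf]

theorem coeff_one_iter (f : R⟦X⟧) (m : ℕ) : coeff 1 (iter f m) = coeff 1 f ^ m := by
  induction m with
  | zero => simp [iter]
  | succ m ih => rw [iter, coeff_one_comp, ih, pow_succ']

theorem iter_succ_eq_subst {f : R⟦X⟧} (hf : constantCoeff f = 0) (m : ℕ) :
    iter f (m + 1) = f.subst (iter f m) :=
  comp_eq_subst f (constantCoeff_iter hf m)

theorem iter_add {f : R⟦X⟧} (hf : constantCoeff f = 0) (a b : ℕ) :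
    iter f (a + b) = (iter f a).subst (iter f b) := by
  have hb := HasSubst.of_constantCoeff_zero' (constantCoeff_iter hf b)
  induction a with
  | zero => rw [zero_add, iter, subst_X hb]
  | succ a ih =>
    rw [Nat.add_right_comm, iter_succ_eq_subst hf, ih, iter_succ_eq_subst hf,
      subst_comp_subst_apply (HasSubst.of_constantCoeff_zero' (constantCoeff_iter hf a)) hb]

theorem iter_mul {f : R⟦X⟧} (hf : constantCoeff f = 0) (a b : ℕ) :
    iter f (a * b) = iter (iter f a) b := by
  induction b with
  | zero => rfl
  | succ b ih =>
    rw [Nat.mul_succ, Nat.add_comm, iter_add hf, ih, iter,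
      comp_eq_subst _ (ih ▸ constantCoeff_iter hf (a * b))]

theorem iter_X (m : ℕ) : iter (X : R⟦X⟧) m = X := by
  induction m with
  | zero => rfl
  | succ m ih => rw [iter, ih, comp_eq_subst _ constantCoeff_X, X_subst]

theorem constantCoeff_eq_zero_of_sub_X_eq {k : ℕ} (hk : k ≠ 0) {g u : R⟦X⟧}
    (hg : g - X = X ^ k * u) : constantCoeff g = 0 := by
  simpa [zero_pow hk] using congrArg constantCoeff hg

theorem exists_subst_sub_X_eq {k : ℕ} (hk : 2 ≤ k) {g h u v : R⟦X⟧}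
    (hg : g - X = X ^ k * u) (hh : h - X = X ^ k * v) :
    ∃ w, g.subst h - X = X ^ k * w ∧ constantCoeff w = constantCoeff u + constantCoeff v := by
  have hh0 := constantCoeff_eq_zero_of_sub_X_eq (by omega) hh
  have hsubst := HasSubst.of_constantCoeff_zero' hh0
  obtain ⟨j, rfl⟩ : ∃ j, k = j + 2 := ⟨k - 2, by omega⟩
  -- `h ^ k = X ^ k * (1 + X ^ (k - 1) * v) ^ k`, and the last factor is `1 + O(X)` as `k ≥ 2`.
  have hpow : h ^ (j + 2) = X ^ (j + 2) * (1 + X ^ (j + 1) * v) ^ (j + 2) := by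
    rw [← mul_pow, mul_add, mul_one, ← mul_assoc, ← pow_succ', ← hh, add_sub_cancel]
  refine ⟨v + (1 + X ^ (j + 1) * v) ^ (j + 2) * u.subst h, ?_, ?_⟩
  · rw [eq_add_of_sub_eq hg, subst_add hsubst, subst_mul hsubst, subst_pow hsubst, subst_X hsubst,
      hpow]
    linear_combination hh
  · rw [← comp_eq_subst u hh0]
    simp [constantCoeff_comp, add_comm]

theorem exists_iter_sub_X_eq {k : ℕ} (hk : 2 ≤ k) {g u : R⟦X⟧} (hg : g - X = X ^ k * u)
    (n : ℕ) : ∃ w, iter g n - X = X ^ k * w ∧ constantCoeff w = n • constantCoeff u := by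
  induction n with
  | zero => exact ⟨0, by simp [iter]⟩
  | succ n ih =>
    obtain ⟨w, hw, hw0⟩ := ih
    obtain ⟨w', hw', hw'0⟩ := exists_subst_sub_X_eq hk hg hw
    refine ⟨w', ?_, by rw [hw'0, hw0, succ_nsmul']⟩
    rw [iter_succ_eq_subst (constantCoeff_eq_zero_of_sub_X_eq (by omega) hg), hw']

theorem eq_X_of_iter_eq_X [IsAddTorsionFree R] {g : R⟦X⟧} (hg0 : constantCoeff g = 0)
    (hg1 : coeff 1 g = 1) {n : ℕ} (hn : n ≠ 0) (hgn : iter g n = X) : g = X := by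
  rw [← sub_eq_zero, ← constantCoeff_divXPowOrder_eq_zero_iff]
  by_contra hne
  have h2 : 2 ≤ (g - X).order.toNat := by
    have := nat_le_order (g - X) 2 fun i hi => by
      interval_cases i <;> simp [hg0, hg1]
    rwa [← ENat.natCast_toNat (order_eq_top.not.mpr
      fun h => hne (constantCoeff_divXPowOrder_eq_zero_iff.mpr h)), Nat.cast_le] at this
  obtain ⟨w, hw, hw0⟩ := exists_iter_sub_X_eq h2 X_pow_order_mul_divXPowOrder.symm n
  have hw0' : constantCoeff w = 0 := by
    have := congrArg (coeff (0 + (g - X).order.toNat)) hw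
    rwa [coeff_X_pow_mul, coeff_zero_eq_constantCoeff_apply, hgn, sub_self, map_zero,
      eq_comm] at this
  rw [hw0', eq_comm, nsmul_eq_zero_iff_right hn] at hw0
  exact hne hw0

end PS

theorem stmt_4_general (F : Type*) [Field F] [CharZero F] (f : PowerSeries F) (hf : f ∈ PS.G F)
    (n : ℕ) (hord : PS.HasOrder f n) :
    (PowerSeries.coeff (R := F) 1 f) ^ n = 1 ∧
    ∀ m, 0 < m → m < n → (PowerSeries.coeff (R := F) 1 f) ^ m ≠ 1 := by
  obtain ⟨hfn, hfm⟩ := hord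
  refine ⟨by rw [← PS.coeff_one_iter, hfn, coeff_one_X], fun m hm hmn hpow => hfm m hm hmn ?_⟩
  refine PS.eq_X_of_iter_eq_X (PS.constantCoeff_iter hf.1 m) (by rw [PS.coeff_one_iter, hpow])
    (n := n) (by omega) ?_
  rw [← PS.iter_mul hf.1, mul_comm, PS.iter_mul hf.1, hfn, PS.iter_X]

theorem stmt_4 (F : Type*) [Field F] [CharZero F] (f : PowerSeries F) (hf : f ∈ PS.G F)
    (n : ℕ) (hn : 0 < n) (hord : PS.HasOrder f n) :
    (PowerSeries.coeff (R := F) 1 f) ^ n = 1 ∧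
    ∀ m, 0 < m → m < n → (PowerSeries.coeff (R := F) 1 f) ^ m ≠ 1 :=
  stmt_4_general F f hf n hord
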